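/- arXiv:1801.08015 — 4 statements merged into one kernel-verified Lean document; each statement's English description precedes it below -/
import Mathlib

section
/- Taking solution sets of pp formulas commutes with directed colimits: if M is the colimit of a directed system (M_i) of R-modules, then φ(M) is the union (colimit) of the images of the φ(M_i) in M^k. -/
/-! A witness `b : Fin n → M` for `a ∈ φ(M)` and the `m` equations it satisfies are finitely
many elements and relations; in a directed colimit all of them already live, and hold, at a
single stage. The converse inclusion is just that linear maps preserve pp-definable sets. -/

/-- The set of `k`-tuples in `M` that extend to a solution in `M^n` of the homogeneous
system `∑ i, r i j • x i = 0` (for all `j`): a pp-definable subset. -/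
def ppSet (R : Type*) [Ring R] {n m k : ℕ} (h : k ≤ n) (r : Fin n → Fin m → R)
    (M : Type*) [AddCommGroup M] [Module R M] : Set (Fin k → M) :=
  { a | ∃ b : Fin n → M, (∀ i : Fin k, b (Fin.castLE h i) = a i) ∧
      ∀ j : Fin m, ∑ i, r i j • b i = 0 }

theorem comp_mem_ppSet {R : Type*} [Ring R] {n m k : ℕ} (h : k ≤ n) (r : Fin n → Fin m → R)
    {M N : Type*} [AddCommGroup M] [Module R M] [AddCommGroup N] [Module R N]
    (g : M →ₗ[R] N) {a : Fin k → M} (ha : a ∈ ppSet R h r M) : g ∘ a ∈ ppSet R h r N := by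
  obtain ⟨b, hb_ext, hb_eq⟩ := ha
  refine ⟨g ∘ b, fun i => congrArg g (hb_ext i), fun j => ?_⟩
  simp only [Function.comp_apply, ← map_smul, ← map_sum, hb_eq j, map_zero]

namespace Module.DirectLimit

variable {R : Type*} [Semiring R] {ι : Type*} [Preorder ι] [DecidableEq ι] {G : ι → Type*}
  [∀ i, AddCommMonoid (G i)] [∀ i, Module R (G i)] {f : ∀ i j, i ≤ j → G i →ₗ[R] G j}
  {α : Type*} [Finite α]

theorem exists_of_finite [Nonempty ι] [IsDirectedOrder ι] (z : α → DirectLimit G f) :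
    ∃ i, ∃ x : α → G i, ∀ t, of R ι G f i (x t) = z t := by
  choose idx x hx using fun t => exists_of (z t)
  obtain ⟨i, hi⟩ := Finite.exists_le idx
  exact ⟨i, fun t => f (idx t) i (hi t) (x t), fun t => by rw [of_f, hx]⟩

theorem exists_map_eq_zero_of_finite [DirectedSystem G (f · · ·)] [IsDirectedOrder ι] {i : ι}
    {x : α → G i} (hx : ∀ t, of R ι G f i (x t) = 0) :
    ∃ j, ∃ hij : i ≤ j, ∀ t, f i j hij (x t) = 0 := by
  have : Nonempty ι := ⟨i⟩
  choose idx hle hzero using fun t => of.zero_exact (hx t)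
  obtain ⟨M, hM⟩ := Finite.exists_le idx
  obtain ⟨j, hij, hMj⟩ := exists_ge_ge i M
  refine ⟨j, hij, fun t => ?_⟩
  rw [← DirectedSystem.map_map (f := (f · · ·)) (hle t) ((hM t).trans hMj), hzero t, map_zero]

end Module.DirectLimit

open Module.DirectLimit in
/-- Taking solution sets of pp formulas commutes with directed colimits: if
`M = colim M i` is the direct limit of a directed system of `R`-modules, then `φ(M)` is the
union of the images of the `φ(M i)`. -/
theorem stmt7 (R : Type*) [Ring R] {n m k : ℕ} (h : k ≤ n) (r : Fin n → Fin m → R)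
    {ι : Type*} [Preorder ι] [Nonempty ι] [IsDirected ι (· ≤ ·)] [DecidableEq ι]
    (G : ι → Type*) [∀ i, AddCommGroup (G i)] [∀ i, Module R (G i)]
    (f : ∀ i j, i ≤ j → G i →ₗ[R] G j) [DirectedSystem G (fun i j hij => f i j hij)]
    (a : Fin k → Module.DirectLimit G f) :
    a ∈ ppSet R h r (Module.DirectLimit G f) ↔
      ∃ (i : ι) (b : Fin k → G i),
        (∀ j, Module.DirectLimit.of R ι G f i (b j) = a j) ∧ b ∈ ppSet R h r (G i) := by
  constructor
  · rintro ⟨b, hb_ext, hb_eq⟩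
    obtain ⟨i, c, hc⟩ := exists_of_finite b
    have hc_eq : ∀ j, of R ι G f i (∑ t, r t j • c t) = 0 := fun j => by
      simpa only [map_sum, map_smul, hc] using hb_eq j
    obtain ⟨i', hii', hc_zero⟩ := exists_map_eq_zero_of_finite hc_eq
    refine ⟨i', fun t => f i i' hii' (c (Fin.castLE h t)), fun t => by rw [of_f, hc, hb_ext],
      fun t => f i i' hii' (c t), fun _ => rfl, fun j => ?_⟩
    simpa only [map_sum, map_smul] using hc_zero j
  · rintro ⟨i, b, hb, hb_mem⟩
    obtain rfl : of R ι G f i ∘ b = a := funext hb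
    exact comp_mem_ppSet h r (of R ι G f i) hb_mem
end

section
/- The class of injective right R-modules is closed under direct limits (equivalently, is a definable subcategory of Mod-R) if and only if R is right noetherian. -/
/-!
If `R` is noetherian, every ideal is finitely presented, and a linear map from a finitely
presented module into a direct limit factors through some stage of the system; Baer's criterion
for that stage then gives it for the limit.

Conversely, let `I n` be an ascending chain of ideals with union `J`, and embed each `R ⧸ I n`
into an injective module `E n`. The direct sum `⊕ E n` is the directed union of the injective
finite products `∏_{k<n} E k`, hence injective by hypothesis, so the map `J → ⊕ E n`,
`a ↦ (a mod I k)_k`, extends to `R`. The image of `1` is supported on some `{k | k < n}`, hence so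
is the image of every `a ∈ J`; its `n`-th component vanishing means `a ∈ I n`, so the chain
stabilizes at `n`.
-/

open Module

universe u v

theorem Module.Injective.of_leftInverse {R : Type u} [Ring R] {M N : Type v}
    [AddCommGroup M] [Module R M] [AddCommGroup N] [Module R N] [Module.Injective R M]
    (i : N →ₗ[R] M) (r : M →ₗ[R] N) (hri : Function.LeftInverse r i) :
    Module.Injective R N where
  out X Y _ _ _ _ a ha g := by
    obtain ⟨g', hg'⟩ := Module.Injective.out a ha (i ∘ₗ g)
    exact ⟨r ∘ₗ g', fun x => by simp [hg', hri (g x)]⟩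

theorem Module.exists_injective_embedding (R : Type u) [Ring R] [Small.{v} R] (M : Type v)
    [AddCommGroup M] [Module R M] :
    ∃ (E : Type v) (_ : AddCommGroup E) (_ : Module R E) (e : M →ₗ[R] E),
      Module.Injective R E ∧ Function.Injective e := by
  open CategoryTheory in
  let ι : ModuleCat.of R M ⟶ Injective.under (ModuleCat.of R M) := Injective.ι _
  exact ⟨Injective.under (ModuleCat.of R M) |>.carrier, inferInstance, inferInstance, ι.hom,
    Module.injective_module_of_injective_object (inj := Injective.injective_under _) R _,
    (ModuleCat.mono_iff_injective ι).mp inferInstance⟩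

namespace Module.DirectLimit

variable {R : Type u} [Ring R] {ι : Type*} [Preorder ι] [DecidableEq ι]
  {G : ι → Type*} [∀ i, AddCommGroup (G i)] [∀ i, Module R (G i)]
  {f : ∀ i j, i ≤ j → G i →ₗ[R] G j}

theorem exists_comp_eq_of_pi [Nonempty ι] [IsDirectedOrder ι] {κ : Type*} [Fintype κ]
    [DecidableEq κ] (g : (κ → R) →ₗ[R] DirectLimit G f) :
    ∃ i, ∃ θ : (κ → R) →ₗ[R] G i, of R ι G f i ∘ₗ θ = g := by
  choose i y hy using fun k => exists_of (g (Pi.single k 1))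
  obtain ⟨j, hj⟩ := Finite.exists_le i
  refine ⟨j, Fintype.linearCombination R fun k => f (i k) j (hj k) (y k), ?_⟩
  refine LinearMap.pi_ext' fun k => LinearMap.ext_ring ?_
  simp [of_f, hy]

variable [DirectedSystem G fun i j h => f i j h]

theorem exists_le_ker_of_fg [IsDirectedOrder ι] {M : Type*} [AddCommGroup M] [Module R M]
    {K : Submodule R M} (hK : K.FG) {i : ι} (θ : M →ₗ[R] G i)
    (h : K ≤ LinearMap.ker (of R ι G f i ∘ₗ θ)) :
    ∃ j, ∃ hij : i ≤ j, K ≤ LinearMap.ker (f i j hij ∘ₗ θ) := by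
  obtain ⟨s, rfl⟩ := hK
  have : Nonempty ι := ⟨i⟩
  choose! j hij hj using fun x (hx : x ∈ s) => of.zero_exact (h (Submodule.subset_span hx))
  obtain ⟨k, hk⟩ := (insert i (s.image j)).exists_le
  have hik : i ≤ k := hk i (Finset.mem_insert_self _ _)
  refine ⟨k, hik, Submodule.span_le.mpr fun x hx => ?_⟩
  have hjk : j x ≤ k := hk _ (Finset.mem_insert_of_mem (Finset.mem_image_of_mem j hx))
  simp [← DirectedSystem.map_map (f := fun i j h => f i j h) (hij x hx) hjk, hj x hx]

theorem exists_comp_eq_of_finitePresentation [Nonempty ι] [IsDirectedOrder ι] {P : Type*}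
    [AddCommGroup P] [Module R P] [FinitePresentation R P] (g : P →ₗ[R] DirectLimit G f) :
    ∃ j, ∃ h : P →ₗ[R] G j, of R ι G f j ∘ₗ h = g := by
  obtain ⟨n, K, e, hK⟩ := FinitePresentation.exists_fin R P
  obtain ⟨i, θ, hθ⟩ := exists_comp_eq_of_pi (g ∘ₗ e.symm.toLinearMap ∘ₗ K.mkQ)
  have hKθ : K ≤ LinearMap.ker (of R ι G f i ∘ₗ θ) := fun v hv => by
    simp [hθ, (Submodule.Quotient.mk_eq_zero K).mpr hv]
  obtain ⟨j, hij, hj⟩ := exists_le_ker_of_fg hK θ hKθ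
  refine ⟨j, K.liftQ _ hj ∘ₗ e.toLinearMap, LinearMap.ext fun p => ?_⟩
  obtain ⟨v, hv⟩ := K.mkQ_surjective (e p)
  have := congr($hθ v)
  simp only [LinearMap.comp_apply, Submodule.mkQ_apply] at this hv
  simp only [LinearMap.comp_apply, LinearEquiv.coe_coe, ← hv, Submodule.liftQ_apply, of_f, this]
  rw [hv, LinearEquiv.symm_apply_apply]

end Module.DirectLimit

theorem Module.Injective.directLimit {R : Type u} [Ring R] [IsNoetherianRing R] [Small.{v} R]
    {ι : Type*} [Preorder ι] [Nonempty ι] [IsDirectedOrder ι] [DecidableEq ι]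
    {G : ι → Type v} [∀ i, AddCommGroup (G i)] [∀ i, Module R (G i)]
    {f : ∀ i j, i ≤ j → G i →ₗ[R] G j} [DirectedSystem G fun i j h => f i j h]
    (hG : ∀ i, Module.Injective R (G i)) : Module.Injective R (Module.DirectLimit G f) := by
  refine Baer.injective fun I g => ?_
  have := finitePresentation_of_finite R I
  obtain ⟨j, h, rfl⟩ := Module.DirectLimit.exists_comp_eq_of_finitePresentation g
  obtain ⟨F, hF⟩ := Baer.of_injective (hG j) I h
  exact ⟨Module.DirectLimit.of R ι G f j ∘ₗ F, fun x hx => by simp [hF x hx]⟩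

section VanishingFrom

variable (R : Type u) [Ring R] (E : ℕ → Type v)
  [∀ k, AddCommGroup (E k)] [∀ k, Module R (E k)]

def vanishingFrom (n : ℕ) : Submodule R (∀ k, E k) :=
  Submodule.pi {k | n ≤ k} fun _ => ⊥

variable {R E}

theorem mem_vanishingFrom {n : ℕ} {v : ∀ k, E k} :
    v ∈ vanishingFrom R E n ↔ ∀ k, n ≤ k → v k = 0 := by
  simp [vanishingFrom, Submodule.mem_pi]

theorem vanishingFrom_mono : Monotone (vanishingFrom R E) :=
  fun _ _ hnm _ hv => mem_vanishingFrom.mpr fun k hk => mem_vanishingFrom.mp hv k (hnm.trans hk)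

instance injective_vanishingFrom [Small.{v} R] [∀ k, Module.Injective R (E k)] (n : ℕ) :
    Module.Injective R (vanishingFrom R E n) := by
  classical
  let r : (∀ k, E k) →ₗ[R] vanishingFrom R E n :=
    LinearMap.codRestrict _ (LinearMap.pi fun k => if n ≤ k then 0 else LinearMap.proj k)
      fun v => mem_vanishingFrom.mpr fun k hk => by simp [hk]
  refine .of_leftInverse (vanishingFrom R E n).subtype r fun v => Subtype.ext (funext fun k => ?_)
  by_cases hk : n ≤ k
  · simp [r, hk, mem_vanishingFrom.mp v.2 k hk]
  · simp [r, hk]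

end VanishingFrom

theorem chain_stabilizes_of_baer_iSup_vanishingFrom {R : Type u} [Ring R] (I : ℕ →o Ideal R)
    {E : ℕ → Type v} [∀ k, AddCommGroup (E k)] [∀ k, Module R (E k)]
    (e : ∀ k, R ⧸ I k →ₗ[R] E k) (he : ∀ k, Function.Injective (e k))
    (hE : Module.Baer R ↥(⨆ n, vanishingFrom R E n)) :
    ∃ n, ∀ m, n ≤ m → I n = I m := by
  set J := ⨆ n, I n
  let ψ : J →ₗ[R] ∀ k, E k := LinearMap.pi fun k => e k ∘ₗ (I k).mkQ ∘ₗ J.subtype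
  have hψ : ∀ x, ψ x ∈ ⨆ n, vanishingFrom R E n := fun x => by
    obtain ⟨n, hn⟩ := (Submodule.mem_iSup_of_chain I x).mp x.2
    refine Submodule.mem_iSup_of_mem n (mem_vanishingFrom.mpr fun k hk => ?_)
    simp [ψ, (Submodule.Quotient.mk_eq_zero _).mpr (I.monotone hk hn)]
  obtain ⟨F, hF⟩ := hE J (ψ.codRestrict _ hψ)
  obtain ⟨n, hn⟩ := (Submodule.mem_iSup_of_chain ⟨_, vanishingFrom_mono⟩ _).mp (F 1).2
  refine ⟨n, fun m hm => le_antisymm (I.monotone hm) fun a ha => ?_⟩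
  have haJ : a ∈ J := Submodule.mem_iSup_of_mem m ha
  -- `ψ a = F a = a • F 1` vanishes from `n` on, in particular at `n`
  have hψa : ψ ⟨a, haJ⟩ ∈ vanishingFrom R E n := by
    have : ψ ⟨a, haJ⟩ = a • (F 1 : ∀ k, E k) := by
      rw [← Submodule.coe_smul, ← map_smul, smul_eq_mul, mul_one, hF a haJ]
      rfl
    exact this ▸ Submodule.smul_mem _ a hn
  have := mem_vanishingFrom.mp hψa n le_rfl
  simpa [ψ, map_eq_zero_iff _ (he n), Submodule.Quotient.mk_eq_zero] using this

def InjectivesClosedUnderDirectLimits (R : Type) [Ring R] : Prop :=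
  ∀ (ι : Type) [Preorder ι] [Nonempty ι] [IsDirected ι (· ≤ ·)] [DecidableEq ι]
    (G : ι → Type) [∀ i, AddCommGroup (G i)] [∀ i, Module R (G i)]
    (f : ∀ i j, i ≤ j → G i →ₗ[R] G j) [DirectedSystem G fun i j h => f i j h],
    (∀ i, Module.Injective R (G i)) → Module.Injective R (Module.DirectLimit G f)

namespace InjectivesClosedUnderDirectLimits

variable {R : Type} [Ring R]

theorem injective_iSup (H : InjectivesClosedUnderDirectLimits R) {ι : Type} [Preorder ι]
    [Nonempty ι] [IsDirectedOrder ι] {M : Type} [AddCommGroup M] [Module R M]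
    {N : ι → Submodule R M} (hN : Monotone N) (hinj : ∀ i, Module.Injective R (N i)) :
    Module.Injective R ↥(⨆ i, N i) := by
  classical
  let f i j (hij : i ≤ j) : N i →ₗ[R] N j := Submodule.inclusion (hN hij)
  have : DirectedSystem (fun i => N i) fun i j h => f i j h :=
    ⟨fun _ _ => rfl, fun _ _ _ _ _ _ => rfl⟩
  let Φ : Module.DirectLimit _ f →ₗ[R] ↥(⨆ i, N i) :=
    Module.DirectLimit.lift R ι _ f (fun i => Submodule.inclusion (le_iSup N i)) fun _ _ _ _ => rfl
  have hΦ : Function.Bijective Φ := by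
    refine ⟨Module.DirectLimit.lift_injective _ _ fun _ => Submodule.inclusion_injective _,
      fun x => ?_⟩
    obtain ⟨i, hi⟩ := (Submodule.mem_iSup_of_directed N hN.directed_le).mp x.2
    exact ⟨Module.DirectLimit.of R ι _ f i ⟨x, hi⟩, Module.DirectLimit.lift_of ..⟩
  exact Baer.injective (.of_equiv (.ofBijective Φ hΦ) (Baer.of_injective (H ι _ f hinj)))

theorem isNoetherianRing (H : InjectivesClosedUnderDirectLimits R) : IsNoetherianRing R := by
  rw [isNoetherianRing_iff, ← monotone_stabilizes_iff_noetherian]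
  intro I
  choose E _ _ e hE he using fun n => Module.exists_injective_embedding R (R ⧸ I n)
  exact chain_stabilizes_of_baer_iSup_vanishingFrom I e he
    (Baer.of_injective (H.injective_iSup vanishingFrom_mono inferInstance))

end InjectivesClosedUnderDirectLimits

theorem injectivesClosedUnderDirectLimits_iff (R : Type) [Ring R] :
    InjectivesClosedUnderDirectLimits R ↔ IsNoetherianRing R :=
  ⟨InjectivesClosedUnderDirectLimits.isNoetherianRing,
    fun _ _ _ _ _ _ _ _ _ _ _ => Module.Injective.directLimit⟩

/-- The class of injective right `R`-modules (= left `Rᵐᵒᵖ`-modules) is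
closed under direct limits iff `R` is right noetherian. -/
theorem stmt13 (R : Type) [Ring R] :
    (∀ (ι : Type) [Preorder ι] [Nonempty ι] [IsDirected ι (· ≤ ·)] [DecidableEq ι]
        (G : ι → Type) [∀ i, AddCommGroup (G i)] [∀ i, Module Rᵐᵒᵖ (G i)]
        (f : ∀ i j, i ≤ j → G i →ₗ[Rᵐᵒᵖ] G j)
        [DirectedSystem G (fun i j hij => f i j hij)],
      (∀ i, Module.Injective Rᵐᵒᵖ (G i)) →
        Module.Injective Rᵐᵒᵖ (Module.DirectLimit G f)) ↔
      IsNoetherianRing Rᵐᵒᵖ :=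
  injectivesClosedUnderDirectLimits_iff Rᵐᵒᵖ
end

section
/- Within the category of abelian groups, the smallest full subcategory containing ℤ and closed under direct products, direct limits and pure subgroups is exactly the class of torsion-free abelian groups. -/
/-- A class `C` of abelian groups is definably closed if it is closed under isomorphism,
arbitrary direct products, directed colimits (direct limits), and pure subgroups. -/
structure IsDefClosed (C : (G : Type) → [AddCommGroup G] → Prop) : Prop where
  iso : ∀ (G H : Type) [AddCommGroup G] [AddCommGroup H], (G ≃+ H) → C G → C H
  prod : ∀ (ι : Type) (M : ι → Type) [∀ i, AddCommGroup (M i)],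
    (∀ i, C (M i)) → C (∀ i, M i)
  dirlim : ∀ (ι : Type) [Preorder ι] [Nonempty ι] [IsDirected ι (· ≤ ·)] [DecidableEq ι]
    (G : ι → Type) [∀ i, AddCommGroup (G i)] (f : ∀ i j, i ≤ j → G i →+ G j)
    [DirectedSystem G (fun i j hij => f i j hij)],
    (∀ i, C (G i)) → C (AddCommGroup.DirectLimit G f)
  pure : ∀ (B : Type) [AddCommGroup B] (H : AddSubgroup B), C B →
    (∀ (n : ℤ) (h : B), h ∈ H → (∃ b : B, n • b = h) → ∃ a ∈ H, n • a = h) → C H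

/-- The torsion-free class is definably closed. -/
theorem tfDefClosed : IsDefClosed (fun G _ => ∀ (n : ℤ) (x : G), n • x = 0 → n = 0 ∨ x = 0) := by
  constructor
  · intro G H _ _ e hG n x hx
    rcases hG n (e.symm x) (by rw [← map_zsmul, hx, map_zero]) with h | h
    · exact Or.inl h
    · exact Or.inr (by simpa using congrArg e h)
  · intro ι M _ hM n x hx
    by_cases hn : n = 0
    · exact Or.inl hn
    · refine Or.inr (funext fun i => ?_)
      rcases hM i n (x i) (congrFun hx i) with h | h
      · exact absurd h hn
      · exact h
  · intro ι _ _ _ _ Gs _ f _ hGs n x hx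
    by_cases hn : n = 0
    · exact Or.inl hn
    refine Or.inr ?_
    induction x using AddCommGroup.DirectLimit.induction_on with
    | ih i g =>
      rw [← map_zsmul] at hx
      obtain ⟨j, hij, hj⟩ := AddCommGroup.DirectLimit.of.zero_exact _ _ hx
      rw [map_zsmul] at hj
      rcases hGs j n (f i j hij g) hj with h | h
      · exact absurd h hn
      · rw [← AddCommGroup.DirectLimit.of_f (hij := hij), h, map_zero]
  · intro B _ H hB _ n x hx
    rcases hB n x (by simpa using congrArg (Subtype.val) hx) with h | h
    · exact Or.inl h
    · exact Or.inr (Subtype.ext h)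

theorem stmt14_aux (G : Type) [AddCommGroup G]
    (tf : ∀ (n : ℤ) (x : G), n • x = 0 → n = 0 ∨ x = 0)
    (C : (G : Type) → [AddCommGroup G] → Prop) (hC : IsDefClosed C) (hZ : C ℤ) : C G := by
  classical
  have tf' : NoZeroSMulDivisors ℤ G := by
    constructor
    intro n x h
    exact tf n x h
  -- the directed system of finitely generated subgroups
  set Gs : Finset G → Type := fun s => ↥(AddSubgroup.closure (s : Set G)) with hGs
  letI : ∀ s, AddCommGroup (Gs s) := fun s => by infer_instance
  set f : ∀ s t : Finset G, s ≤ t → Gs s →+ Gs t := fun s t hst =>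
    AddSubgroup.inclusion (AddSubgroup.closure_mono (by exact_mod_cast hst)) with hf
  haveI : DirectedSystem Gs (fun s t hst => f s t hst) := by
    constructor
    · intro s x; rfl
    · intro s t u hst htu x; rfl
  -- each stage is in C
  have hstage : ∀ s : Finset G, C (Gs s) := by
    intro s
    haveI : AddGroup.FG (Gs s) := by
      rw [AddGroup.fg_iff_addSubgroup_fg]
      exact (AddSubgroup.fg_iff _).2 ⟨(s : Set G), rfl, s.finite_toSet⟩
    haveI : Module.Finite ℤ (Gs s) := Module.Finite.iff_addGroup_fg.2 inferInstance
    haveI : NoZeroSMulDivisors ℤ (Gs s) := by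
      constructor
      intro n x h
      have h2 : n • (x : G) = 0 := by exact_mod_cast congrArg Subtype.val h
      rcases tf n (x : G) h2 with h' | h'
      · exact Or.inl h'
      · exact Or.inr (Subtype.ext h')
    haveI : Module.Free ℤ (Gs s) := Module.free_of_finite_type_torsion_free'
    have b := Module.Free.chooseBasis ℤ (Gs s)
    have e : (Module.Free.ChooseBasisIndex ℤ (Gs s) → ℤ) ≃+ Gs s :=
      (b.equivFun.symm : _ ≃ₗ[ℤ] _).toAddEquiv
    exact hC.iso _ _ e (hC.prod _ _ fun _ => hZ)
  have hlim := hC.dirlim (Finset G) Gs f hstage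
  -- the direct limit is isomorphic to G
  have compat : ∀ (s t : Finset G) (hst : s ≤ t) (x : Gs s),
      (AddSubgroup.closure (t : Set G)).subtype (f s t hst x)
        = (AddSubgroup.closure (s : Set G)).subtype x := fun _ _ _ _ => rfl
  set L := AddCommGroup.DirectLimit.lift Gs f G
    (fun s => (AddSubgroup.closure (s : Set G)).subtype) compat with hL
  have hinj : Function.Injective L :=
    AddCommGroup.DirectLimit.lift_injective (G := Gs) (f := f) G
      (fun s => (AddSubgroup.closure (s : Set G)).subtype) compat
      (fun s => Subtype.val_injective)
  have hsurj : Function.Surjective L := by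
    intro x
    refine ⟨AddCommGroup.DirectLimit.of Gs f {x}
      ⟨x, AddSubgroup.subset_closure (by simp)⟩, ?_⟩
    rw [hL, AddCommGroup.DirectLimit.lift_of]
    rfl
  exact hC.iso _ _ (AddEquiv.ofBijective L ⟨hinj, hsurj⟩) hlim

/-- Within the category of abelian groups, the smallest class containing `ℤ`
and closed under direct products, direct limits and pure subgroups is exactly the class of
torsion-free abelian groups. -/
theorem stmt14 (G : Type) [AddCommGroup G] :
    (∀ C : (G : Type) → [AddCommGroup G] → Prop, IsDefClosed C → C ℤ → C G) ↔
      (∀ (n : ℤ) (x : G), n • x = 0 → n = 0 ∨ x = 0) := by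
  constructor
  · intro h
    refine h _ tfDefClosed (fun n x hx => ?_)
    have h2 : n * x = 0 := by simpa [smul_eq_mul] using hx
    rcases mul_eq_zero.1 h2 with h | h
    · exact Or.inl h
    · exact Or.inr h
  · intro tf C hC hZ
    exact stmt14_aux G tf C hC hZ
end

section
/- Within the category of abelian groups, the definable subcategory generated by ℚ/ℤ (smallest class containing ℚ/ℤ and closed under direct products, direct limits and pure subgroups) is exactly the class of divisible abelian groups. -/
/-- The abelian group `ℚ/ℤ`. -/
abbrev QmodZ : Type := ℚ ⧸ (Int.castAddHom ℚ).range

/-- `ℚ/ℤ` is the same as `AddCircle (1 : ℚ)`. -/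
noncomputable def qmodZEquiv : QmodZ ≃+ AddCircle (1 : ℚ) :=
  QuotientAddGroup.quotientAddEquivOfEq (by
    ext x
    simp only [AddMonoidHom.mem_range, Int.coe_castAddHom, AddSubgroup.mem_zmultiples_iff,
      zsmul_one])

/-- Divisibility as a class of abelian groups. -/
def DivClass (G : Type) [AddCommGroup G] : Prop :=
  ∀ n : ℤ, n ≠ 0 → Function.Surjective (fun x : G => n • x)

lemma divClass_isDefClosed : IsDefClosed DivClass := by
  constructor
  · intro G H _ _ e hG n hn y
    obtain ⟨x, hx⟩ := hG n hn (e.symm y)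
    exact ⟨e x, by simpa using congrArg e (hx.trans rfl) |>.trans (by simp)⟩
  · intro ι M _ h n hn y
    choose x hx using fun i => h i n hn (y i)
    exact ⟨x, funext hx⟩
  · intro ι _ _ _ _ Gs _ f _ h n hn z
    induction z using AddCommGroup.DirectLimit.induction_on with
    | ih i g =>
      obtain ⟨g', hg'⟩ := h i n hn g
      exact ⟨AddCommGroup.DirectLimit.of Gs f i g', by
        simpa using congrArg (AddCommGroup.DirectLimit.of Gs f i) hg'⟩
  · intro B _ H hB hpure n hn y
    obtain ⟨b, hb⟩ := hB n hn (y : B)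
    obtain ⟨a, haH, ha⟩ := hpure n (y : B) y.2 ⟨b, hb⟩
    exact ⟨⟨a, haH⟩, Subtype.ext (by simpa using ha)⟩

lemma divClass_qmodZ : DivClass QmodZ := by
  intro n hn y
  obtain ⟨q, rfl⟩ := QuotientAddGroup.mk_surjective y
  refine ⟨((n : ℚ)⁻¹ * q : ℚ), ?_⟩
  show ((n • ((n : ℚ)⁻¹ * q) : ℚ) : QmodZ) = _
  congr 1
  rw [zsmul_eq_mul, ← mul_assoc, mul_inv_cancel₀ (by exact_mod_cast hn), one_mul]

/-- Within the category of abelian groups, the definable subcategory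
generated by `ℚ/ℤ` (smallest class containing `ℚ/ℤ` and closed under direct products,
direct limits and pure subgroups) is exactly the class of divisible abelian groups. -/
theorem stmt15 (G : Type) [AddCommGroup G] :
    (∀ C : (G : Type) → [AddCommGroup G] → Prop, IsDefClosed C → C QmodZ → C G) ↔
      (∀ n : ℤ, n ≠ 0 → Function.Surjective (fun x : G => n • x)) := by
  constructor
  · intro h
    exact h DivClass divClass_isDefClosed divClass_qmodZ
  · intro hdiv C hC hQ
    -- embed G into a product of copies of ℚ/ℤ via characters
    classical
    let P : Type := CharacterModule G → QmodZ
    let φ : G →+ P :=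
      { toFun := fun g c => qmodZEquiv.symm (c g)
        map_zero' := by funext c; rw [Pi.zero_apply]; simp
        map_add' := by intro a b; funext c; rw [Pi.add_apply]; simp }
    have hinj : Function.Injective φ := by
      intro a b hab
      rw [← sub_eq_zero]
      apply CharacterModule.eq_zero_of_character_apply
      intro c
      have := congrFun hab c
      simp only [φ] at this
      have : c a = c b := qmodZEquiv.symm.injective this
      simp [map_sub, this]
    have hP : C P := hC.prod _ _ fun _ => hQ
    have hrange : C φ.range := by
      refine hC.pure P φ.range hP ?_
      rintro n _ ⟨g, rfl⟩
      intro hex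
      rcases eq_or_ne n 0 with rfl | hn
      · obtain ⟨b, hb⟩ := hex
        rw [zero_smul] at hb
        exact ⟨0, ⟨0, map_zero φ⟩, by rw [zero_smul, hb]⟩
      · obtain ⟨g', hg'⟩ := hdiv n hn g
        have hg'' : n • g' = g := hg'
        exact ⟨φ g', ⟨g', rfl⟩, by rw [← map_zsmul, hg'']⟩
    exact hC.iso _ _ (AddMonoidHom.ofInjective hinj).symm hrange
end
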